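/- Let s, r, c, c₁, c₂ be positive integers, let R ∈ ℝ^{r×c} be a fixed (learned) shared-reference matrix, and let W_q, W_k ∈ ℝ^{c×c₁} and W_v ∈ ℝ^{c×c₂} be fixed weight matrices. For X ∈ ℝ^{s×c}, let X̃ ∈ ℝ^{(r+s)×c} denote the vertical concatenation of R on top of X, and define the softmax-normalized shared-reference attention operator A_R(X) = softmax((X·W_q) · (X̃·W_k)ᵀ) · (X̃·W_v), where softmax is applied row-wise: (softmax M)_{ij} = exp(M_{ij}) / ∑_k exp(M_{ik}). Then A_R is spatially permutation equivariant: for every permutation π of {1,…,s} with permutation matrix P_π ∈ ℝ^{s×s}, and every X ∈ ℝ^{s×c}, A_R(P_π·X) = P_π·A_R(X). -/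

import Mathlib

open Matrix

/-!
Left multiplication by `permMatrix π` reindexes rows by `π`. Prepending the fixed references `R`
turns this into the reindexing of the rows of `X̃` by `σ = id ⊕ π`, so the score matrix
`(X W_q)(X̃ W_k)ᵀ` gets its rows reindexed by `π` and its columns by `σ`. Row-wise softmax
commutes with both, because a row sum is invariant under the column permutation `σ`, and in the
final product the two copies of `σ` cancel.
-/

/-- The permutation matrix of a permutation `π`, whose `i`-th row is the
standard basis vector `e_{π i}`. -/
noncomputable def permMatrix {n : Type*} [DecidableEq n] (π : Equiv.Perm n) :
    Matrix n n ℝ :=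
  Matrix.of fun i j => if π i = j then (1 : ℝ) else 0

/-- The row-wise softmax of a matrix:
`(softmax A) i j = exp (A i j) / ∑ k, exp (A i k)`. -/
noncomputable def softmax {m n : Type*} [Fintype n] (A : Matrix m n ℝ) :
    Matrix m n ℝ :=
  Matrix.of fun i j => Real.exp (A i j) / ∑ k, Real.exp (A i k)

/-- The softmax-normalized attention operator augmented with shared references
`R`: with `X̃` the vertical concatenation of `R` on top of `X`,
`A_R(X) = softmax((X·W_q) · (X̃·W_k)ᵀ) · (X̃·W_v)`. -/
noncomputable def softmaxSharedRefAttn {s r c c₁ c₂ : ℕ}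
    (R : Matrix (Fin r) (Fin c) ℝ)
    (Wq Wk : Matrix (Fin c) (Fin c₁) ℝ) (Wv : Matrix (Fin c) (Fin c₂) ℝ)
    (X : Matrix (Fin s) (Fin c) ℝ) : Matrix (Fin s) (Fin c₂) ℝ :=
  let Xt : Matrix (Fin r ⊕ Fin s) (Fin c) ℝ := Matrix.fromRows R X
  softmax ((X * Wq) * (Xt * Wk)ᵀ) * (Xt * Wv)

theorem permMatrix_mul_eq_submatrix {n m : Type*} [Fintype n] [DecidableEq n] (π : Equiv.Perm n)
    (M : Matrix n m ℝ) : permMatrix π * M = M.submatrix π id := by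
  ext i j
  simp [permMatrix, mul_apply]

theorem fromRows_submatrix_right {l m n o α : Type*} (A : Matrix l o α)
    (B : Matrix m o α) (e : n → m) :
    fromRows A (B.submatrix e id) = (fromRows A B).submatrix (Sum.map id e) id := by
  ext (i | i) j <;> rfl

theorem softmax_submatrix {l m n o : Type*} [Fintype n] [Fintype o] (A : Matrix m n ℝ)
    (f : l → m) (e : o ≃ n) : softmax (A.submatrix f e) = (softmax A).submatrix f e := by
  ext i j
  simp only [softmax, of_apply, submatrix_apply, e.sum_comp (fun k => Real.exp (A (f i) k))]

theorem submatrix_id_mul {l m n p α : Type*} [Fintype n] [Mul α] [AddCommMonoid α]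
    (M : Matrix m n α) (N : Matrix n p α)
    (e : l → m) : M.submatrix e id * N = (M * N).submatrix e id := by
  rw [submatrix_mul M N e id id Function.bijective_id, submatrix_id_id]

theorem mul_submatrix_id {l m n p α : Type*} [Fintype n] [Mul α] [AddCommMonoid α]
    (M : Matrix m n α) (N : Matrix n p α)
    (e : l → p) : M * N.submatrix id e = (M * N).submatrix id e := by
  rw [submatrix_mul M N id id e Function.bijective_id, submatrix_id_id]

theorem softmaxSharedRefAttn_submatrix {s r c c₁ c₂ : ℕ} (R : Matrix (Fin r) (Fin c) ℝ)
    (Wq Wk : Matrix (Fin c) (Fin c₁) ℝ) (Wv : Matrix (Fin c) (Fin c₂) ℝ)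
    (π : Equiv.Perm (Fin s)) (X : Matrix (Fin s) (Fin c) ℝ) :
    softmaxSharedRefAttn R Wq Wk Wv (X.submatrix π id) =
      (softmaxSharedRefAttn R Wq Wk Wv X).submatrix π id := by
  let σ : Equiv.Perm (Fin r ⊕ Fin s) := Equiv.sumCongr (Equiv.refl _) π
  have hXt : fromRows R (X.submatrix π id) = (fromRows R X).submatrix σ id :=
    fromRows_submatrix_right R X π
  have hScores : X.submatrix π id * Wq * ((fromRows R X).submatrix σ id * Wk)ᵀ =
      (X * Wq * (fromRows R X * Wk)ᵀ).submatrix π σ := by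
    rw [submatrix_id_mul _ Wk, transpose_submatrix, mul_submatrix_id, submatrix_id_mul X Wq,
      submatrix_id_mul, submatrix_submatrix]
    rfl
  rw [softmaxSharedRefAttn, softmaxSharedRefAttn, hXt, hScores, softmax_submatrix,
    submatrix_id_mul _ Wv, submatrix_mul_equiv]

theorem softmaxSharedRefAttn_permutation_equivariant_general
    (s r c c₁ c₂ : ℕ)
    (R : Matrix (Fin r) (Fin c) ℝ)
    (Wq Wk : Matrix (Fin c) (Fin c₁) ℝ) (Wv : Matrix (Fin c) (Fin c₂) ℝ)
    (π : Equiv.Perm (Fin s)) (X : Matrix (Fin s) (Fin c) ℝ) :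
    softmaxSharedRefAttn R Wq Wk Wv (permMatrix π * X) =
      permMatrix π * softmaxSharedRefAttn R Wq Wk Wv X := by
  rw [permMatrix_mul_eq_submatrix, permMatrix_mul_eq_submatrix, softmaxSharedRefAttn_submatrix]

/-- The softmax-normalized attention operator augmented with shared references
is spatially permutation equivariant. -/
theorem softmaxSharedRefAttn_permutation_equivariant
    (s r c c₁ c₂ : ℕ) (hs : 0 < s) (hr : 0 < r) (hc : 0 < c)
    (hc₁ : 0 < c₁) (hc₂ : 0 < c₂)
    (R : Matrix (Fin r) (Fin c) ℝ)
    (Wq Wk : Matrix (Fin c) (Fin c₁) ℝ) (Wv : Matrix (Fin c) (Fin c₂) ℝ)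
    (π : Equiv.Perm (Fin s)) (X : Matrix (Fin s) (Fin c) ℝ) :
    softmaxSharedRefAttn R Wq Wk Wv (permMatrix π * X) =
      permMatrix π * softmaxSharedRefAttn R Wq Wk Wv X :=
  softmaxSharedRefAttn_permutation_equivariant_general s r c c₁ c₂ R Wq Wk Wv π X
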